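/- There exists an absolute constant C > 0 such that for all μ with 0 < μ ≤ 1, all β ≥ 0 and all ξ ∈ ℝ, one has | √(K_μ(ξ)) − √β·μ^{1/4}·|ξ|^{1/2} | ≤ C·(1 + √β + β). -/

import Mathlib

/-- The symbol `T_μ(ξ) = tanh(√μ |ξ|)/(√μ |ξ|)`, with value `1` at `ξ = 0`. -/
noncomputable def Tmu (μ ξ : ℝ) : ℝ :=
  if ξ = 0 then 1 else Real.tanh (Real.sqrt μ * |ξ|) / (Real.sqrt μ * |ξ|)

/-- The full-dispersion symbol `K_μ(ξ) = T_μ(ξ)·(1 + β μ ξ²)`. -/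
noncomputable def Kmu (β μ ξ : ℝ) : ℝ := Tmu μ ξ * (1 + β * μ * ξ ^ 2)

private lemma tanh_exp_form (x : ℝ) :
    Real.tanh x = (Real.exp x - Real.exp (-x)) / (Real.exp x + Real.exp (-x)) := by
  rw [Real.tanh_eq_sinh_div_cosh, Real.sinh_eq, Real.cosh_eq]
  have h : 0 < Real.exp x + Real.exp (-x) := by positivity
  field_simp

private lemma tanh_nonneg' {x : ℝ} (hx : 0 ≤ x) : 0 ≤ Real.tanh x := by
  rw [tanh_exp_form]
  have h1 : Real.exp (-x) ≤ Real.exp x := Real.exp_le_exp.2 (by linarith)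
  have h2 : 0 < Real.exp x + Real.exp (-x) := by positivity
  exact div_nonneg (by linarith) h2.le

private lemma tanh_le_one' (x : ℝ) : Real.tanh x ≤ 1 := by
  rw [tanh_exp_form]
  have h2 : 0 < Real.exp x + Real.exp (-x) := by positivity
  rw [div_le_one h2]
  have := Real.exp_pos (-x)
  linarith

private lemma tanh_le_two_mul {x : ℝ} (hx : 0 ≤ x) : Real.tanh x ≤ 2 * x := by
  rw [tanh_exp_form]
  have h2 : 0 < Real.exp x + Real.exp (-x) := by positivity
  rw [div_le_iff₀ h2]
  have e1 : -(2 * x) + 1 ≤ Real.exp (-(2 * x)) := Real.add_one_le_exp _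
  have e2 : Real.exp (2 * x) * Real.exp (-(2 * x)) = 1 := by
    rw [← Real.exp_add]; simp
  have e3 : Real.exp (2 * x) = Real.exp x * Real.exp x := by
    rw [← Real.exp_add]; ring_nf
  have e4 : Real.exp x * Real.exp (-x) = 1 := by rw [← Real.exp_add]; simp
  have hp : 0 < Real.exp (2 * x) := Real.exp_pos _
  nlinarith [mul_nonneg (sub_nonneg.2 (by linarith : (1 : ℝ) + -(2 * x) ≤ Real.exp (-(2 * x)))) hp.le, Real.exp_pos x, Real.exp_pos (-x)]

private lemma mul_one_sub_tanh_le_one {x : ℝ} (hx : 0 ≤ x) :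
    x * (1 - Real.tanh x) ≤ 1 := by
  rw [tanh_exp_form]
  have h2 : 0 < Real.exp x + Real.exp (-x) := by positivity
  have key : 1 - (Real.exp x - Real.exp (-x)) / (Real.exp x + Real.exp (-x))
      = 2 * Real.exp (-x) / (Real.exp x + Real.exp (-x)) := by
    field_simp
    ring
  rw [key, mul_div_assoc']
  rw [div_le_one h2]
  have e1 : x + 1 ≤ Real.exp x := Real.add_one_le_exp _
  have e4 : Real.exp x * Real.exp (-x) = 1 := by rw [← Real.exp_add]; simp
  nlinarith [Real.exp_pos (-x), Real.exp_pos x]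

private lemma sqrt_add_le' (u v : ℝ) (hu : 0 ≤ u) (hv : 0 ≤ v) :
    Real.sqrt (u + v) ≤ Real.sqrt u + Real.sqrt v := by
  have h : 0 ≤ Real.sqrt u + Real.sqrt v := by positivity
  rw [show Real.sqrt (u + v) ≤ Real.sqrt u + Real.sqrt v ↔
      Real.sqrt (u + v) ≤ Real.sqrt u + Real.sqrt v from Iff.rfl]
  nlinarith [Real.sq_sqrt hu, Real.sq_sqrt hv, Real.sq_sqrt (add_nonneg hu hv),
    Real.sqrt_nonneg u, Real.sqrt_nonneg v, Real.sqrt_nonneg (u + v),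
    mul_nonneg (Real.sqrt_nonneg u) (Real.sqrt_nonneg v),
    sq_nonneg (Real.sqrt (u + v) - Real.sqrt u - Real.sqrt v),
    sq_nonneg (Real.sqrt (u + v) + Real.sqrt u + Real.sqrt v)]

private lemma abs_sqrt_sub_sqrt_le (a b : ℝ) (ha : 0 ≤ a) (hb : 0 ≤ b) :
    |Real.sqrt a - Real.sqrt b| ≤ Real.sqrt |a - b| := by
  have key : ∀ u v : ℝ, 0 ≤ v → v ≤ u →
      Real.sqrt u - Real.sqrt v ≤ Real.sqrt (u - v) := by
    intro u v hv huv
    have h := sqrt_add_le' v (u - v) hv (by linarith)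
    rw [show v + (u - v) = u by ring] at h
    linarith
  rcases le_total b a with hab | hab
  · rw [abs_of_nonneg (by linarith : (0:ℝ) ≤ a - b)]
    have h1 := key a b hb hab
    have h2 : Real.sqrt b - Real.sqrt a ≤ Real.sqrt (a - b) :=
      le_trans (by nlinarith [Real.sqrt_le_sqrt hab]) (Real.sqrt_nonneg _)
    rw [abs_sub_le_iff]; exact ⟨h1, h2⟩
  · rw [abs_of_nonpos (by linarith : a - b ≤ 0), neg_sub]
    have h1 := key b a ha hab
    have h2 : Real.sqrt a - Real.sqrt b ≤ Real.sqrt (b - a) :=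
      le_trans (by nlinarith [Real.sqrt_le_sqrt hab]) (Real.sqrt_nonneg _)
    rw [abs_sub_le_iff]; exact ⟨h2, h1⟩

theorem sqrt_Kmu_comparison :
    ∃ C > 0, ∀ μ : ℝ, 0 < μ → μ ≤ 1 → ∀ β : ℝ, 0 ≤ β → ∀ ξ : ℝ,
      |Real.sqrt (Kmu β μ ξ) - Real.sqrt β * μ ^ ((1:ℝ)/4) * |ξ| ^ ((1:ℝ)/2)| ≤
        C * (1 + Real.sqrt β + β) := by
  refine ⟨2, by norm_num, ?_⟩
  intro μ hμ hμ1 β hβ ξ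
  have hμ0 : (0:ℝ) ≤ μ := hμ.le
  have hr : Real.sqrt β * μ ^ ((1:ℝ)/4) * |ξ| ^ ((1:ℝ)/2)
      = Real.sqrt (β * (Real.sqrt μ * |ξ|)) := by
    have h4 : μ ^ ((1:ℝ)/4) = Real.sqrt (Real.sqrt μ) := by
      rw [show (1:ℝ)/4 = (1/2) * (1/2) by norm_num, Real.rpow_mul hμ0,
        ← Real.sqrt_eq_rpow, ← Real.sqrt_eq_rpow]
    have h2 : |ξ| ^ ((1:ℝ)/2) = Real.sqrt |ξ| := (Real.sqrt_eq_rpow _).symm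
    rw [h4, h2, Real.sqrt_mul hβ, Real.sqrt_mul (Real.sqrt_nonneg μ)]
    ring
  rw [hr]
  by_cases hξ : ξ = 0
  · subst hξ
    simp only [Kmu, Tmu, if_pos rfl]
    norm_num
    nlinarith [Real.sqrt_nonneg β]
  · set x : ℝ := Real.sqrt μ * |ξ| with hxdef
    have hx : 0 < x := mul_pos (Real.sqrt_pos.2 hμ) (abs_pos.2 hξ)
    have hx2 : x ^ 2 = μ * ξ ^ 2 := by
      rw [hxdef, mul_pow, Real.sq_sqrt hμ0, sq_abs]
    have hK : Kmu β μ ξ = Real.tanh x / x + β * (x * Real.tanh x) := by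
      unfold Kmu Tmu
      rw [if_neg hξ, ← hxdef, show β * μ * ξ ^ 2 = β * x ^ 2 by rw [hx2]; ring]
      field_simp
    have ht0 : 0 ≤ Real.tanh x := tanh_nonneg' hx.le
    have ht1 : Real.tanh x ≤ 1 := tanh_le_one' x
    have ht2 : Real.tanh x / x ≤ 2 := by
      rw [div_le_iff₀ hx]
      have := tanh_le_two_mul hx.le
      nlinarith
    have ht3 : x * (1 - Real.tanh x) ≤ 1 := mul_one_sub_tanh_le_one hx.le
    have hq : 0 ≤ Real.tanh x / x := div_nonneg ht0 hx.le
    have hKnn : 0 ≤ Kmu β μ ξ := by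
      rw [hK]
      have := mul_nonneg hβ (mul_nonneg hx.le ht0)
      linarith
    have hβx : 0 ≤ β * x := mul_nonneg hβ hx.le
    have hdiff : |Kmu β μ ξ - β * x| ≤ 2 + β := by
      rw [hK, abs_le]
      constructor
      · have h3 : β * (x * (1 - Real.tanh x)) ≤ β * 1 :=
          mul_le_mul_of_nonneg_left ht3 hβ
        nlinarith
      · have h1 : β * (x * Real.tanh x) - β * x ≤ 0 := by
          have : x * Real.tanh x ≤ x * 1 := mul_le_mul_of_nonneg_left ht1 hx.le
          nlinarith
        linarith
    calc |Real.sqrt (Kmu β μ ξ) - Real.sqrt (β * x)|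
        ≤ Real.sqrt |Kmu β μ ξ - β * x| := abs_sqrt_sub_sqrt_le _ _ hKnn hβx
      _ ≤ Real.sqrt (2 + β) := Real.sqrt_le_sqrt hdiff
      _ ≤ Real.sqrt 2 + Real.sqrt β := sqrt_add_le' 2 β (by norm_num) hβ
      _ ≤ 2 * (1 + Real.sqrt β + β) := by
          nlinarith [Real.sqrt_nonneg β,
            Real.sq_sqrt (show (0:ℝ) ≤ 2 by norm_num), Real.sqrt_nonneg 2]
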